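/- arXiv:2105.03560 — 2 statements merged into one kernel-verified Lean document; each statement's English description precedes it below -/
import Mathlib

section
/- Let (Ω, μ) and (S, ν) be measure spaces, Γ ⊆ S a measurable set, and d ≥ 1. Let q ∈ L²(μ; ℝᵈ), f, u ∈ L²(μ), let κ_Ω : Ω → ℝ and κ : Γ → ℝ be measurable with κ̲ ≤ κ_Ω ≤ κ̄ μ-a.e. and κ̲ ≤ κ ≤ κ̄ ν-a.e. for constants 0 < κ̲ ≤ κ̄, let τ : S → ℝ be measurable with 0 < τ ≤ τ̄ ν-a.e. for some τ̄ > 0, let w : S → ℝ be measurable with ∫_S τ w² dν < ∞, and let φ, ḡ, δ, l : Γ → ℝ be measurable with 0 < l ≤ κ̲/(3τ̄) ν-a.e. on Γ and all integrals below finite. Assume the flux-deviation bound ∫_Γ l δ² dν ≤ (κ̲/3) ∫_Ω κ_Ω⁻¹ |q|² dμ, and assume the energy identity ∫_Ω κ_Ω⁻¹ |q|² dμ + ∫_S τ w² dν = −∫_Γ φ·[(κ/l)(φ − ḡ) − δ + τ w] dν + ∫_Ω f u dμ. Then ∫_Ω κ_Ω⁻¹ |q|² dμ + ∫_S τ w²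 dν + ∫_Γ (κ/l) φ² dν ≤ 2 ‖f‖_{L²(μ)} ‖u‖_{L²(μ)} + 3 ∫_Γ (κ/l) ḡ² dν. -/
/-!
With `c = κ/l`, the three weighted Young inequalities `2cφḡ ≤ cφ²/3 + 3cḡ²`,
`2φδ ≤ cφ²/3 + (3/κ̲) l δ²` (as `c ≥ κ̲/l`) and `-2τφw ≤ cφ²/3 + τw²` (as `3τ ≤ c`, which is
where `l ≤ κ̲/(3τ̄)` enters) bound `∫_Γ cφ²` by twice the boundary term of the energy identity
plus `3∫_Γ cḡ²`, a δ-term that the flux-deviation bound absorbs into `∫_Ω κ_Ω⁻¹|q|²`, and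
`∫_Γ τw² ≤ ∫_S τw²`. Substituting the energy identity and Cauchy–Schwarz for `∫ fu` gives the claim.
-/

open MeasureTheory

theorem two_mul_le_mul_sq_add_sq_div {a b ε : ℝ} (hε : 0 < ε) :
    2 * a * b ≤ ε * a ^ 2 + b ^ 2 / ε := by
  have hsq : ε * a ^ 2 + b ^ 2 / ε - 2 * a * b = (ε * a - b) ^ 2 / ε := by
    field_simp
    ring
  linarith [show 0 ≤ (ε * a - b) ^ 2 / ε by positivity]

theorem MeasureTheory.L2.integral_mul_le_norm_mul_norm {α : Type*} [MeasurableSpace α]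
    {μ : Measure α} (f u : Lp ℝ 2 μ) : ∫ x, f x * u x ∂μ ≤ ‖f‖ * ‖u‖ := by
  have hinner : inner ℝ f u = ∫ x, f x * u x ∂μ := by
    simp [L2.inner_def, mul_comm]
  exact hinner ▸ real_inner_le_norm f u

theorem boundary_flux_young {κlo κ l τ φ g δ w : ℝ} (hκlo : 0 < κlo) (hκ : κlo ≤ κ) (hl : 0 < l)
    (hτ : 0 ≤ τ) (hlτ : 3 * l * τ ≤ κlo) :
    κ / l * φ ^ 2 ≤ 2 * (φ * (κ / l * (φ - g) - δ + τ * w)) + 3 * (κ / l * g ^ 2)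
      + 3 / κlo * (l * δ ^ 2) + τ * w ^ 2 := by
  have hc : 0 ≤ κ / l := div_nonneg (hκlo.le.trans hκ) hl.le
  have hκlo_c : κlo / (3 * l) ≤ κ / l / 3 := by
    rw [div_div, mul_comm l]
    gcongr
  have hτc : τ ≤ κ / l / 3 := by
    rw [div_div, le_div_iff₀ (by positivity)]
    linarith
  have hg : 2 * φ * g ≤ 1 / 3 * φ ^ 2 + g ^ 2 / (1 / 3) :=
    two_mul_le_mul_sq_add_sq_div (by norm_num)
  have hδ : 2 * φ * δ ≤ κlo / (3 * l) * φ ^ 2 + 3 / κlo * (l * δ ^ 2) := by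
    convert two_mul_le_mul_sq_add_sq_div (a := φ) (b := δ) (ε := κlo / (3 * l)) (by positivity)
      using 2
    field_simp
  have hw : 2 * φ * -w ≤ 1 * φ ^ 2 + (-w) ^ 2 / 1 := two_mul_le_mul_sq_add_sq_div one_pos
  linarith [mul_le_mul_of_nonneg_left hg hc, mul_le_mul_of_nonneg_left hw hτ,
    mul_le_mul_of_nonneg_right hκlo_c (sq_nonneg φ), mul_le_mul_of_nonneg_right hτc (sq_nonneg φ)]

theorem integral_boundary_flux_young {S : Type*} [MeasurableSpace S] {m : Measure S} {κlo : ℝ}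
    {κ l τ φ g δ w : S → ℝ} (hκlo : 0 < κlo)
    (hκ : ∀ᵐ x ∂m, κlo ≤ κ x) (hl : ∀ᵐ x ∂m, 0 < l x) (hτ : ∀ᵐ x ∂m, 0 ≤ τ x)
    (hlτ : ∀ᵐ x ∂m, 3 * l x * τ x ≤ κlo)
    (hφ2 : Integrable (fun x => κ x / l x * φ x ^ 2) m)
    (hφ : Integrable (fun x => φ x * (κ x / l x * (φ x - g x) - δ x + τ x * w x)) m)
    (hg2 : Integrable (fun x => κ x / l x * g x ^ 2) m)
    (hδ2 : Integrable (fun x => l x * δ x ^ 2) m)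
    (hw2 : Integrable (fun x => τ x * w x ^ 2) m) :
    ∫ x, κ x / l x * φ x ^ 2 ∂m
      ≤ 2 * ∫ x, φ x * (κ x / l x * (φ x - g x) - δ x + τ x * w x) ∂m
        + 3 * ∫ x, κ x / l x * g x ^ 2 ∂m + 3 / κlo * ∫ x, l x * δ x ^ 2 ∂m
        + ∫ x, τ x * w x ^ 2 ∂m := by
  have hpt : ∀ᵐ x ∂m, κ x / l x * φ x ^ 2
      ≤ 2 * (φ x * (κ x / l x * (φ x - g x) - δ x + τ x * w x)) + 3 * (κ x / l x * g x ^ 2)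
        + 3 / κlo * (l x * δ x ^ 2) + τ x * w x ^ 2 := by
    filter_upwards [hκ, hl, hτ, hlτ] with x hκx hlx hτx hlτx
    exact boundary_flux_young hκlo hκx hlx hτx hlτx
  refine (integral_mono_ae hφ2 (by fun_prop) hpt).trans_eq ?_
  rw [integral_add (by fun_prop) hw2, integral_add (by fun_prop) (by fun_prop),
    integral_add (by fun_prop) (by fun_prop), integral_const_mul, integral_const_mul,
    integral_const_mul]

theorem estimate_norm_H_general
    {Ω S : Type*} [MeasurableSpace Ω] [MeasurableSpace S]
    (μ : Measure Ω) (ν : Measure S) (Γ : Set S)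
    (d : ℕ)
    (q : Lp (EuclideanSpace ℝ (Fin d)) 2 μ)
    (f u : Lp ℝ 2 μ)
    (κΩ : Ω → ℝ)
    (κ : S → ℝ)
    (κlo κhi : ℝ) (hκlo : 0 < κlo)
    (hκae : ∀ᵐ x ∂(ν.restrict Γ), κlo ≤ κ x ∧ κ x ≤ κhi)
    (τ : S → ℝ)
    (τbar : ℝ) (hτbar : 0 < τbar)
    (hτae : ∀ᵐ x ∂ν, 0 < τ x ∧ τ x ≤ τbar)
    (w : S → ℝ)
    (hτw : Integrable (fun x => τ x * w x ^ 2) ν)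
    (φ g δ l : S → ℝ)
    (hlae : ∀ᵐ x ∂(ν.restrict Γ), 0 < l x ∧ l x ≤ κlo / (3 * τbar))
    (intφ : Integrable
      (fun x => φ x * ((κ x / l x) * (φ x - g x) - δ x + τ x * w x))
      (ν.restrict Γ))
    (intφ2 : Integrable (fun x => (κ x / l x) * φ x ^ 2) (ν.restrict Γ))
    (intg2 : Integrable (fun x => (κ x / l x) * g x ^ 2) (ν.restrict Γ))
    (intlδ : Integrable (fun x => l x * δ x ^ 2) (ν.restrict Γ))
    (hdev : ∫ x in Γ, l x * δ x ^ 2 ∂ν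
      ≤ (κlo / 3) * ∫ x, (κΩ x)⁻¹ * ‖q x‖ ^ 2 ∂μ)
    (henergy : (∫ x, (κΩ x)⁻¹ * ‖q x‖ ^ 2 ∂μ) + ∫ x, τ x * w x ^ 2 ∂ν
      = -(∫ x in Γ, φ x * ((κ x / l x) * (φ x - g x) - δ x + τ x * w x) ∂ν)
        + ∫ x, f x * u x ∂μ) :
    (∫ x, (κΩ x)⁻¹ * ‖q x‖ ^ 2 ∂μ) + (∫ x, τ x * w x ^ 2 ∂ν)
        + (∫ x in Γ, (κ x / l x) * φ x ^ 2 ∂ν)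
      ≤ 2 * ‖f‖ * ‖u‖ + 3 * ∫ x in Γ, (κ x / l x) * g x ^ 2 ∂ν := by
  have hτΓ : ∀ᵐ x ∂(ν.restrict Γ), 0 < τ x ∧ τ x ≤ τbar := ae_restrict_of_ae hτae
  have hlτ : ∀ᵐ x ∂(ν.restrict Γ), 3 * l x * τ x ≤ κlo := by
    filter_upwards [hlae, hτΓ] with x hlx hτx
    have hlτbar : l x * (3 * τbar) ≤ κlo := (le_div_iff₀ (by positivity)).1 hlx.2
    linarith [mul_le_mul_of_nonneg_left hτx.2 hlx.1.le]
  have hboundary := integral_boundary_flux_young hκlo (hκae.mono fun _ h => h.1)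
    (hlae.mono fun _ h => h.1) (hτΓ.mono fun _ h => h.1.le) hlτ intφ2 intφ intg2 intlδ
    hτw.restrict
  have hwΓ : ∫ x in Γ, τ x * w x ^ 2 ∂ν ≤ ∫ x, τ x * w x ^ 2 ∂ν :=
    setIntegral_le_integral hτw (hτae.mono fun x h => by have := h.1; positivity)
  have hδ : 3 / κlo * ∫ x in Γ, l x * δ x ^ 2 ∂ν ≤ ∫ x, (κΩ x)⁻¹ * ‖q x‖ ^ 2 ∂μ := by
    calc _ ≤ 3 / κlo * (κlo / 3 * ∫ x, (κΩ x)⁻¹ * ‖q x‖ ^ 2 ∂μ) := by gcongr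
      _ = _ := by field_simp
  linarith [L2.integral_mul_le_norm_mul_norm f u]

/-- Lemma `EstimateNormH` (Lemma 3.4) of the paper: if the HDG energy identity
holds and the flux-deviation bound holds, then the squared triple norm is
controlled by `2‖f‖‖u‖ + 3 ∫_Γ (κ/l) ḡ²`. -/
theorem estimate_norm_H
    {Ω S : Type*} [MeasurableSpace Ω] [MeasurableSpace S]
    (μ : Measure Ω) (ν : Measure S) (Γ : Set S) (hΓ : MeasurableSet Γ)
    (d : ℕ) (hd : 1 ≤ d)
    (q : Lp (EuclideanSpace ℝ (Fin d)) 2 μ)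
    (f u : Lp ℝ 2 μ)
    (κΩ : Ω → ℝ) (hκΩmeas : Measurable κΩ)
    (κ : S → ℝ) (hκmeas : Measurable κ)
    (κlo κhi : ℝ) (hκlo : 0 < κlo) (hκord : κlo ≤ κhi)
    (hκΩae : ∀ᵐ x ∂μ, κlo ≤ κΩ x ∧ κΩ x ≤ κhi)
    (hκae : ∀ᵐ x ∂(ν.restrict Γ), κlo ≤ κ x ∧ κ x ≤ κhi)
    (τ : S → ℝ) (hτmeas : Measurable τ)
    (τbar : ℝ) (hτbar : 0 < τbar)
    (hτae : ∀ᵐ x ∂ν, 0 < τ x ∧ τ x ≤ τbar)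
    (w : S → ℝ) (hwmeas : Measurable w)
    (hτw : Integrable (fun x => τ x * w x ^ 2) ν)
    (φ g δ l : S → ℝ)
    (hφmeas : Measurable φ) (hgmeas : Measurable g)
    (hδmeas : Measurable δ) (hlmeas : Measurable l)
    (hlae : ∀ᵐ x ∂(ν.restrict Γ), 0 < l x ∧ l x ≤ κlo / (3 * τbar))
    (intq : Integrable (fun x => (κΩ x)⁻¹ * ‖q x‖ ^ 2) μ)
    (intφ : Integrable
      (fun x => φ x * ((κ x / l x) * (φ x - g x) - δ x + τ x * w x))
      (ν.restrict Γ))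
    (intφ2 : Integrable (fun x => (κ x / l x) * φ x ^ 2) (ν.restrict Γ))
    (intg2 : Integrable (fun x => (κ x / l x) * g x ^ 2) (ν.restrict Γ))
    (intlδ : Integrable (fun x => l x * δ x ^ 2) (ν.restrict Γ))
    (intfu : Integrable (fun x => f x * u x) μ)
    (hdev : ∫ x in Γ, l x * δ x ^ 2 ∂ν
      ≤ (κlo / 3) * ∫ x, (κΩ x)⁻¹ * ‖q x‖ ^ 2 ∂μ)
    (henergy : (∫ x, (κΩ x)⁻¹ * ‖q x‖ ^ 2 ∂μ) + ∫ x, τ x * w x ^ 2 ∂ν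
      = -(∫ x in Γ, φ x * ((κ x / l x) * (φ x - g x) - δ x + τ x * w x) ∂ν)
        + ∫ x, f x * u x ∂μ) :
    (∫ x, (κΩ x)⁻¹ * ‖q x‖ ^ 2 ∂μ) + (∫ x, τ x * w x ^ 2 ∂ν)
        + (∫ x in Γ, (κ x / l x) * φ x ^ 2 ∂ν)
      ≤ 2 * ‖f‖ * ‖u‖ + 3 * ∫ x in Γ, (κ x / l x) * g x ^ 2 ∂ν :=
  estimate_norm_H_general μ ν Γ d q f u κΩ κ κlo κhi hκlo hκae τ τbar hτbar hτae w hτw φ g δ l hlae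
    intφ intφ2 intg2 intlδ hdev henergy
end

section
/- Let c ≥ 1 and let T, E, h, L, L_f, Λq, Λσ, Λu be nonnegative real numbers with h ≤ 1, L ≤ 1, L_f ≤ 1 and 9 c L_f h ≤ 1. Assume T² ≤ c (Λq² + Λσ² + L_f (E + Λu) E) and E² ≤ 3 h T² + 6 ((h + L² h²) Λq² + (L² + h) Λu²). Then T² ≤ 38 c (Λq² + Λσ² + Λu²). -/
/-!
Young's inequality turns the `L_f (E + Λu) E` term of the energy estimate into
`(3/2) c L_f E²` plus data terms; inserting the duality estimate produces `(9/2) c L_f h T²`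
on the right, which the smallness condition `9 c L_f h ≤ 1` bounds by `T² / 2`, so it can be
absorbed into the left-hand side.
-/

section Absorption

variable {α : Type*} [Field α] [LinearOrder α] [IsStrictOrderedRing α]

theorem add_mul_le_three_mul_sq_add_sq_div_two (a b : α) :
    (a + b) * a ≤ (3 * a ^ 2 + b ^ 2) / 2 := by
  linarith [two_mul_le_add_sq a b]

theorem sq_le_two_mul_of_le_add_mul_sq {T E a b K θ : α} (hK : 0 ≤ K) (hKθ : K * θ ≤ 1 / 2)
    (henergy : T ^ 2 ≤ a + K * E ^ 2) (hduality : E ^ 2 ≤ θ * T ^ 2 + b) :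
    T ^ 2 ≤ 2 * (a + K * b) := by
  have hKE : K * E ^ 2 ≤ K * θ * T ^ 2 + K * b := by
    linarith [mul_le_mul_of_nonneg_left hduality hK]
  have hθT : K * θ * T ^ 2 ≤ T ^ 2 / 2 := by
    linarith [mul_le_mul_of_nonneg_right hKθ (sq_nonneg T)]
  linarith

end Absorption

theorem duality_rhs_le {h L Λq Λu : ℝ} (hh : 0 ≤ h) (hh1 : h ≤ 1) (hL : 0 ≤ L) (hL1 : L ≤ 1) :
    6 * ((h + L ^ 2 * h ^ 2) * Λq ^ 2 + (L ^ 2 + h) * Λu ^ 2) ≤ 12 * (Λq ^ 2 + Λu ^ 2) := by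
  have hL2 : L ^ 2 ≤ 1 := pow_le_one₀ hL hL1
  have hLh : L ^ 2 * h ^ 2 ≤ 1 := mul_le_one₀ hL2 (sq_nonneg h) (pow_le_one₀ hh hh1)
  have hq := mul_le_mul_of_nonneg_right (add_le_add hh1 hLh) (sq_nonneg Λq)
  have hu := mul_le_mul_of_nonneg_right (add_le_add hL2 hh1) (sq_nonneg Λu)
  linarith

theorem error_estimate_algebraic_core_general
    (c T E h L Lf Λq Λσ Λu : ℝ)
    (hc : 1 ≤ c)
    (hh : 0 ≤ h) (hL : 0 ≤ L) (hLf : 0 ≤ Lf)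
    (hh1 : h ≤ 1) (hL1 : L ≤ 1) (hLf1 : Lf ≤ 1)
    (hsmall : 9 * c * Lf * h ≤ 1)
    (h1 : T ^ 2 ≤ c * (Λq ^ 2 + Λσ ^ 2 + Lf * (E + Λu) * E))
    (h2 : E ^ 2 ≤ 3 * h * T ^ 2
        + 6 * ((h + L ^ 2 * h ^ 2) * Λq ^ 2 + (L ^ 2 + h) * Λu ^ 2)) :
    T ^ 2 ≤ 38 * c * (Λq ^ 2 + Λσ ^ 2 + Λu ^ 2) := by
  have hc0 : 0 ≤ c := zero_le_one.trans hc
  have hcLf : 0 ≤ c * Lf := mul_nonneg hc0 hLf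
  have hcLf_le : c * Lf ≤ c := mul_le_of_le_one_right hc0 hLf1
  have henergy : T ^ 2 ≤ c * (Λq ^ 2 + Λσ ^ 2) + c * Lf / 2 * Λu ^ 2 + 3 / 2 * (c * Lf) * E ^ 2 := by
    linarith [mul_le_mul_of_nonneg_left (add_mul_le_three_mul_sq_add_sq_div_two E Λu) hcLf]
  have hduality : E ^ 2 ≤ 3 * h * T ^ 2 + 12 * (Λq ^ 2 + Λu ^ 2) :=
    h2.trans (by linarith [duality_rhs_le (Λq := Λq) (Λu := Λu) hh hh1 hL hL1])
  have habsorbed := sq_le_two_mul_of_le_add_mul_sq (by positivity)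
    (by linarith) henergy hduality
  linarith [mul_le_mul_of_nonneg_right hcLf_le (sq_nonneg Λq),
    mul_le_mul_of_nonneg_right hcLf_le (sq_nonneg Λu), mul_nonneg hc0 (sq_nonneg Λσ),
    mul_nonneg hc0 (sq_nonneg Λu)]

/-- The algebraic core of the proof of Theorem 4.2 of the paper: combining the
energy estimate `T² ≤ c(Λq² + Λσ² + L_f(E + Λu)E)` with the duality estimate
`E² ≤ 3hT² + 6((h + L²h²)Λq² + (L² + h)Λu²)` yields, for `h, L, L_f ≤ 1` and
`9 c L_f h ≤ 1`, the bound `T² ≤ 38 c (Λq² + Λσ² + Λu²)`. -/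
theorem error_estimate_algebraic_core
    (c T E h L Lf Λq Λσ Λu : ℝ)
    (hc : 1 ≤ c)
    (hT : 0 ≤ T) (hE : 0 ≤ E) (hh : 0 ≤ h) (hL : 0 ≤ L) (hLf : 0 ≤ Lf)
    (hΛq : 0 ≤ Λq) (hΛσ : 0 ≤ Λσ) (hΛu : 0 ≤ Λu)
    (hh1 : h ≤ 1) (hL1 : L ≤ 1) (hLf1 : Lf ≤ 1)
    (hsmall : 9 * c * Lf * h ≤ 1)
    (h1 : T ^ 2 ≤ c * (Λq ^ 2 + Λσ ^ 2 + Lf * (E + Λu) * E))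
    (h2 : E ^ 2 ≤ 3 * h * T ^ 2
        + 6 * ((h + L ^ 2 * h ^ 2) * Λq ^ 2 + (L ^ 2 + h) * Λu ^ 2)) :
    T ^ 2 ≤ 38 * c * (Λq ^ 2 + Λσ ^ 2 + Λu ^ 2) :=
  error_estimate_algebraic_core_general c T E h L Lf Λq Λσ Λu hc hh hL hLf hh1 hL1 hLf1 hsmall h1 h2
end
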